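/- arXiv:0903.5466 — 6 statements merged into one kernel-verified Lean document; each statement's English description precedes it below -/
import Mathlib

section
/- For all natural numbers n and k with 0 ≤ k < ⌊n/2⌋, the ℓ₁ distance between the distributions p_k and p_{k+1} equals 2(n − 2k − 1)/(n − k); that is, the sum over ℓ from 0 to k+1 of |p_k(ℓ) − p_{k+1}(ℓ)| equals 2(n − 2k − 1)/(n − k). -/
/-!
On `ℓ ≤ k` both `p_k(ℓ)` and `p_{k+1}(ℓ)` are the nonnegative weight `C(n,ℓ) − C(n,ℓ−1)`
divided by `C(n,k)` resp. `C(n,k+1) ≥ C(n,k)`, so `p_{k+1} = r · p_k` there with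
`r = C(n,k)/C(n,k+1) ≤ 1`, and that part of the distance is `(1 − r) ∑ p_k = 1 − r`.
The mass `1 − r` lost there sits at `ℓ = k+1`, so the distance is `2(1 − r)`, and
`r = (k+1)/(n−k)` by the absorption identity.
-/

noncomputable def schurProb (n k ℓ : ℕ) : ℝ :=
  if ℓ ≤ k then
    ((n.choose ℓ : ℝ) - (if ℓ = 0 then 0 else (n.choose (ℓ - 1) : ℝ))) / (n.choose k : ℝ)
  else 0

/-- The dimension of the irreducible `Sₙ`-representation of shape `(n − ℓ, ℓ)`. -/
noncomputable def schurWeight (n ℓ : ℕ) : ℝ :=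
  (n.choose ℓ : ℝ) - if ℓ = 0 then 0 else (n.choose (ℓ - 1) : ℝ)

lemma sum_range_schurWeight (n m : ℕ) :
    ∑ ℓ ∈ Finset.range (m + 1), schurWeight n ℓ = n.choose m := by
  induction m with
  | zero => simp [schurWeight]
  | succ m ih =>
    rw [Finset.sum_range_succ, ih, schurWeight, if_neg m.succ_ne_zero, Nat.add_sub_cancel]
    ring

lemma schurWeight_nonneg {n ℓ : ℕ} (hℓ : ℓ ≤ n / 2) : 0 ≤ schurWeight n ℓ := by
  rcases ℓ with _ | m
  · simp [schurWeight]
  · have hmono : n.choose m ≤ n.choose (m + 1) := Nat.choose_le_succ_of_lt_half_left (by omega)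
    simpa [schurWeight] using hmono

lemma schurProb_of_le {n k ℓ : ℕ} (hℓ : ℓ ≤ k) :
    schurProb n k ℓ = schurWeight n ℓ / n.choose k := by
  rw [schurProb, if_pos hℓ, schurWeight]

lemma choose_div_choose_succ {n k : ℕ} (hk : k < n) :
    (n.choose k : ℝ) / n.choose (k + 1) = (k + 1) / (n - k) := by
  have hkey : (n.choose (k + 1) : ℝ) * (k + 1) = n.choose k * (n - k) := by
    have := Nat.choose_succ_right_eq n k
    rw [← Nat.cast_sub hk.le]
    exact_mod_cast this
  have hb : (n.choose (k + 1) : ℝ) ≠ 0 := by exact_mod_cast (Nat.choose_pos hk).ne'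
  have hnk : (n : ℝ) - k ≠ 0 := sub_ne_zero.mpr (by exact_mod_cast hk.ne')
  rw [div_eq_div_iff hb hnk]
  linarith

lemma choose_div_choose_succ_le_one {n k : ℕ} (hk : k < n / 2) :
    (n.choose k : ℝ) / n.choose (k + 1) ≤ 1 :=
  div_le_one_of_le₀ (by exact_mod_cast Nat.choose_le_succ_of_lt_half_left hk) (Nat.cast_nonneg _)

lemma schurProb_nonneg {n k : ℕ} (hk : k ≤ n / 2) (ℓ : ℕ) : 0 ≤ schurProb n k ℓ := by
  by_cases hℓ : ℓ ≤ k
  · rw [schurProb_of_le hℓ]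
    exact div_nonneg (schurWeight_nonneg (hℓ.trans hk)) (Nat.cast_nonneg _)
  · simp [schurProb, hℓ]

lemma sum_range_schurProb {n k : ℕ} (hk : k ≤ n) :
    ∑ ℓ ∈ Finset.range (k + 1), schurProb n k ℓ = 1 := by
  have hne : (n.choose k : ℝ) ≠ 0 := by exact_mod_cast (Nat.choose_pos hk).ne'
  rw [Finset.sum_congr rfl fun ℓ hℓ => schurProb_of_le (Nat.lt_succ_iff.mp (Finset.mem_range.mp hℓ)),
    ← Finset.sum_div, sum_range_schurWeight, div_self hne]

lemma schurProb_succ_of_le {n k ℓ : ℕ} (hk : k ≤ n) (hℓ : ℓ ≤ k) :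
    schurProb n (k + 1) ℓ = schurProb n k ℓ * ((n.choose k : ℝ) / n.choose (k + 1)) := by
  have hne : (n.choose k : ℝ) ≠ 0 := by exact_mod_cast (Nat.choose_pos hk).ne'
  rw [schurProb_of_le hℓ, schurProb_of_le (hℓ.trans k.le_succ)]
  field_simp

lemma schurProb_succ_self {n k : ℕ} (hk : k < n) :
    schurProb n (k + 1) (k + 1) = 1 - (n.choose k : ℝ) / n.choose (k + 1) := by
  have hne : (n.choose (k + 1) : ℝ) ≠ 0 := by exact_mod_cast (Nat.choose_pos hk).ne'
  rw [schurProb_of_le le_rfl, schurWeight, if_neg k.succ_ne_zero, Nat.add_sub_cancel, sub_div,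
    div_self hne]

lemma sum_range_abs_schurProb_sub_succ {n k : ℕ} (hk : k < n / 2) :
    ∑ ℓ ∈ Finset.range (k + 1), |schurProb n k ℓ - schurProb n (k + 1) ℓ|
      = 1 - (n.choose k : ℝ) / n.choose (k + 1) := by
  have hkn : k ≤ n := by omega
  have hr := choose_div_choose_succ_le_one hk
  calc ∑ ℓ ∈ Finset.range (k + 1), |schurProb n k ℓ - schurProb n (k + 1) ℓ|
      = ∑ ℓ ∈ Finset.range (k + 1), schurProb n k ℓ * (1 - (n.choose k : ℝ) / n.choose (k + 1)) := by
        refine Finset.sum_congr rfl fun ℓ hℓ => ?_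
        rw [schurProb_succ_of_le hkn (Nat.lt_succ_iff.mp (Finset.mem_range.mp hℓ)), ← mul_one_sub,
          abs_of_nonneg (mul_nonneg (schurProb_nonneg hk.le ℓ) (sub_nonneg.mpr hr))]
    _ = 1 - (n.choose k : ℝ) / n.choose (k + 1) := by
        rw [← Finset.sum_mul, sum_range_schurProb hkn, one_mul]

/-- For `0 ≤ k < ⌊n/2⌋`, the ℓ₁ distance between the weak Schur sampling
distributions `p_k` and `p_{k+1}` equals `2(n − 2k − 1)/(n − k)`. -/
theorem schurProb_l1_dist (n k : ℕ) (hk : k < n / 2) :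
    ∑ ℓ ∈ Finset.range (k + 2), |schurProb n k ℓ - schurProb n (k + 1) ℓ|
      = 2 * ((n : ℝ) - 2 * k - 1) / ((n : ℝ) - k) := by
  have hkn : k < n := by omega
  have hr := choose_div_choose_succ_le_one hk
  have hlast : |schurProb n k (k + 1) - schurProb n (k + 1) (k + 1)|
      = 1 - (n.choose k : ℝ) / n.choose (k + 1) := by
    rw [schurProb, if_neg (by omega), schurProb_succ_self hkn, zero_sub, abs_neg,
      abs_of_nonneg (sub_nonneg.mpr hr)]
  have hnk : (n : ℝ) - k ≠ 0 := sub_ne_zero.mpr (by exact_mod_cast hkn.ne')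
  rw [Finset.sum_range_succ, sum_range_abs_schurProb_sub_succ hk, hlast, choose_div_choose_succ hkn]
  field_simp
  ring
end

section
/- For all natural numbers n, t, k with 1 ≤ t ≤ k ≤ ⌊n/2⌋, the failure probability of the threshold algorithm satisfies ∑_{ℓ=0}^{t−1} p_k(ℓ) = C(n,t−1)/C(n,k) ≤ t/(n − t + 1), with equality when k = t. -/
theorem Nat.choose_le_choose_of_le_half {n a b : ℕ} (hab : a ≤ b) (hb : b ≤ n / 2) :
    n.choose a ≤ n.choose b := by
  induction b, hab using Nat.le_induction with
  | base => rfl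
  | succ m _ ih => exact (ih (by omega)).trans (Nat.choose_le_succ_of_lt_half_left (by omega))

theorem Nat.cast_choose_pred_div_choose {t n : ℕ} (ht : 1 ≤ t) (htn : t ≤ n) :
    (n.choose (t - 1) : ℝ) / n.choose t = t / ((n : ℝ) - t + 1) := by
  obtain ⟨s, rfl⟩ := Nat.exists_eq_add_of_le' ht
  have hrec : (n.choose (s + 1) : ℝ) * (s + 1) = n.choose s * ((n : ℝ) - s) := by
    rw [← Nat.cast_sub (by omega)]
    exact_mod_cast Nat.choose_succ_right_eq n s
  have hpos : (0 : ℝ) < n.choose (s + 1) := by exact_mod_cast Nat.choose_pos htn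
  have hns : (0 : ℝ) < (n : ℝ) - s := by
    rw [sub_pos]; exact_mod_cast (show s < n by omega)
  rw [Nat.add_sub_cancel, div_eq_div_iff hpos.ne' (by push_cast; linarith)]
  push_cast
  linarith

section schurProb

variable {n k : ℕ}

theorem schurProb_zero : schurProb n k 0 = 1 / n.choose k := by
  simp [schurProb]

theorem schurProb_succ {ℓ : ℕ} (hℓ : ℓ + 1 ≤ k) :
    schurProb n k (ℓ + 1) = ((n.choose (ℓ + 1) : ℝ) - n.choose ℓ) / n.choose k := by
  simp [schurProb, hℓ]

theorem sum_range_succ_schurProb {m : ℕ} (hm : m ≤ k) :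
    ∑ ℓ ∈ Finset.range (m + 1), schurProb n k ℓ = (n.choose m : ℝ) / n.choose k := by
  induction m with
  | zero => simp [schurProb_zero]
  | succ m ih =>
    rw [Finset.sum_range_succ, ih (by omega), schurProb_succ hm]
    ring

end schurProb

/-- For `1 ≤ t ≤ k ≤ ⌊n/2⌋`, the failure probability of the threshold algorithm
satisfies `∑_{ℓ=0}^{t−1} p_k(ℓ) = C(n,t−1)/C(n,k) ≤ t/(n − t + 1)`, with equality
when `k = t`. -/
theorem threshold_failure_prob (n t k : ℕ) (ht : 1 ≤ t) (htk : t ≤ k) (hk : k ≤ n / 2) :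
    (∑ ℓ ∈ Finset.range t, schurProb n k ℓ) = (n.choose (t - 1) : ℝ) / (n.choose k : ℝ) ∧
    (n.choose (t - 1) : ℝ) / (n.choose k : ℝ) ≤ (t : ℝ) / ((n : ℝ) - t + 1) ∧
    (k = t → (n.choose (t - 1) : ℝ) / (n.choose k : ℝ) = (t : ℝ) / ((n : ℝ) - t + 1)) := by
  have htn : t ≤ n := by omega
  have hratio := Nat.cast_choose_pred_div_choose ht htn
  refine ⟨?_, ?_, fun hkt => hkt ▸ hratio⟩
  · obtain ⟨s, rfl⟩ := Nat.exists_eq_add_of_le' ht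
    simpa using sum_range_succ_schurProb (n := n) (by omega : s ≤ k)
  · calc (n.choose (t - 1) : ℝ) / n.choose k
        ≤ (n.choose (t - 1) : ℝ) / n.choose t := by
          gcongr
          · exact_mod_cast Nat.choose_pos htn
          · exact Nat.choose_le_choose_of_le_half htk hk
      _ = t / ((n : ℝ) - t + 1) := hratio
end

section
/- For all natural numbers n ≥ 1 and k with k ≤ ⌊n/2⌋, the alternating sum ∑_{ℓ=0}^{k} (−1)^ℓ · (C(n,ℓ) − C(n,ℓ−1))/C(n,k) equals (−1)^k · (1 − 2k/n) as real numbers. -/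
/-! The numerator of the alternating sum splits into two partial alternating sums of row `n`
of Pascal's triangle (the second with its index shifted by one), and each collapses to a single
entry of row `n - 1`: the numerator is `(-1)^k (C(n-1,k) - C(n-1,k-1))`. Dividing by `C(n,k)`
gives `(n - k)/n - k/n`. -/

open Finset

theorem Real.alternating_sum_range_choose_eq_choose (m k : ℕ) :
    ∑ ℓ ∈ range (k + 1), (-1 : ℝ) ^ ℓ * (m + 1).choose ℓ = (-1) ^ k * m.choose k := by
  exact_mod_cast Int.alternating_sum_range_choose_eq_choose

theorem alternating_sum_range_choose_sub_choose_pred (m k : ℕ) :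
    ∑ ℓ ∈ range (k + 1), (-1 : ℝ) ^ ℓ *
        (((m + 1).choose ℓ : ℝ) - if ℓ = 0 then 0 else ((m + 1).choose (ℓ - 1) : ℝ))
      = (-1) ^ k * ((m.choose k : ℝ) - if k = 0 then 0 else (m.choose (k - 1) : ℝ)) := by
  cases k with
  | zero => simp
  | succ k =>
    have hshift : ∑ ℓ ∈ range (k + 2), (-1 : ℝ) ^ ℓ *
        (if ℓ = 0 then 0 else ((m + 1).choose (ℓ - 1) : ℝ)) = -((-1) ^ k * m.choose k) := by
      rw [sum_range_succ', ← Real.alternating_sum_range_choose_eq_choose, ← sum_neg_distrib]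
      simp [pow_succ]
    simp only [mul_sub, sum_sub_distrib, hshift, Real.alternating_sum_range_choose_eq_choose,
      if_neg k.succ_ne_zero, Nat.add_sub_cancel]
    ring

theorem cast_choose_div_choose_succ {m k : ℕ} (hk : k ≤ m + 1) :
    (m.choose k : ℝ) / (m + 1).choose k = (m + 1 - k) / (m + 1) := by
  rw [div_eq_div_iff (by exact_mod_cast (Nat.choose_pos hk).ne') (by positivity)]
  have h : (m.choose k * (m + 1 : ℕ) : ℝ) = (m + 1).choose k * ((m + 1 - k : ℕ) : ℝ) := by
    exact_mod_cast Nat.choose_mul_succ_eq m k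
  rw [Nat.cast_sub hk] at h
  push_cast at h
  linear_combination h

theorem cast_choose_pred_div_choose_succ {m k : ℕ} (hk : k ≤ m + 1) :
    (if k = 0 then 0 else (m.choose (k - 1) : ℝ)) / (m + 1).choose k = k / (m + 1) := by
  cases k with
  | zero => simp
  | succ k =>
    rw [if_neg k.succ_ne_zero, Nat.add_sub_cancel,
      div_eq_div_iff (by exact_mod_cast (Nat.choose_pos hk).ne') (by positivity)]
    have h : ((m + 1 : ℕ) * m.choose k : ℝ) = (m + 1).choose (k + 1) * (k + 1 : ℕ) := by
      exact_mod_cast Nat.add_one_mul_choose_eq m k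
    push_cast at h ⊢
    linear_combination h

/-- For `n ≥ 1` and `k ≤ ⌊n/2⌋`, the alternating sum
`∑_{ℓ=0}^{k} (−1)^ℓ (C(n,ℓ) − C(n,ℓ−1))/C(n,k)` (the difference between the
probabilities of an even and an odd weak Schur sampling outcome) equals
`(−1)^k (1 − 2k/n)`. -/
theorem schurProb_alternating_sum (n k : ℕ) (hn : 1 ≤ n) (hk : k ≤ n / 2) :
    ∑ ℓ ∈ Finset.range (k + 1), (-1 : ℝ) ^ ℓ * schurProb n k ℓ
      = (-1 : ℝ) ^ k * (1 - 2 * (k : ℝ) / (n : ℝ)) := by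
  obtain ⟨m, rfl⟩ : ∃ m, n = m + 1 := ⟨n - 1, by omega⟩
  have hkn : k ≤ m + 1 := hk.trans (Nat.div_le_self _ 2)
  have hsum : ∑ ℓ ∈ range (k + 1), (-1 : ℝ) ^ ℓ * schurProb (m + 1) k ℓ
      = (∑ ℓ ∈ range (k + 1), (-1 : ℝ) ^ ℓ *
          (((m + 1).choose ℓ : ℝ) - if ℓ = 0 then 0 else ((m + 1).choose (ℓ - 1) : ℝ)))
        / (m + 1).choose k := by
    rw [sum_div]
    refine sum_congr rfl fun ℓ hℓ => ?_
    rw [schurProb, if_pos (Nat.lt_succ_iff.mp (mem_range.mp hℓ)), mul_div_assoc]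
  rw [hsum, alternating_sum_range_choose_sub_choose_pred, mul_div_assoc, sub_div,
    cast_choose_div_choose_succ hkn, cast_choose_pred_div_choose_succ hkn]
  push_cast
  field_simp
  ring
end

section
/- For all natural numbers n ≥ 1 and k with k ≤ ⌊n/2⌋, the probability that weak Schur sampling yields an even outcome, namely ∑_{ℓ ≤ k, ℓ even} p_k(ℓ), equals 1 − k/n when k is even and equals k/n when k is odd. -/
open Finset

theorem sum_filter_even_choose_sub_choose_pred {R : Type*} [AddCommGroupWithOne R] (m k : ℕ) :
    ∑ ℓ ∈ (range (k + 1)).filter Even,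
      (((m + 1).choose ℓ : R) - if ℓ = 0 then 0 else ((m + 1).choose (ℓ - 1) : R))
      = m.choose (2 * (k / 2)) := by
  induction k with
  | zero => simp [filter_singleton]
  | succ k ih =>
    rw [range_add_one, filter_insert]
    by_cases hk : Even (k + 1)
    · have hk_mod := Nat.even_iff.mp hk
      obtain ⟨j, rfl⟩ : ∃ j, k = j + 1 := ⟨k - 1, by omega⟩
      rw [if_pos hk, sum_insert (by simp), ih, show 2 * ((j + 1) / 2) = j by omega,
        if_neg (Nat.succ_ne_zero _), Nat.add_sub_cancel, Nat.two_mul_div_two_of_even hk,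
        Nat.choose_succ_succ' m (j + 1), Nat.choose_succ_succ' m j]
      push_cast
      abel
    · rw [if_neg hk, ih, show (k + 1) / 2 = k / 2 by grind]

theorem cast_choose_div_cast_choose_succ_left {K : Type*} [Field K] [CharZero K] {m k : ℕ}
    (hk : k ≤ m + 1) : (m.choose k : K) / (m + 1).choose k = 1 - k / (m + 1) := by
  have h := congrArg (Nat.cast : ℕ → K) (Nat.choose_mul_succ_eq m k)
  push_cast [Nat.cast_sub hk] at h
  have hC : ((m + 1).choose k : K) ≠ 0 := by exact_mod_cast (Nat.choose_pos hk).ne'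
  field_simp
  linear_combination h

theorem cast_choose_div_cast_choose_succ_succ {K : Type*} [Field K] [CharZero K] {m k : ℕ}
    (hk : k ≤ m) :
    (m.choose k : K) / (m + 1).choose (k + 1) = (k + 1) / (m + 1) := by
  have h := congrArg (Nat.cast : ℕ → K) (Nat.add_one_mul_choose_eq m k)
  push_cast at h
  have hC : ((m + 1).choose (k + 1) : K) ≠ 0 := by
    exact_mod_cast (Nat.choose_pos (by omega)).ne'
  field_simp
  linear_combination h

/-- For `n ≥ 1` and `k ≤ ⌊n/2⌋`, the probability that weak Schur sampling yields an
even outcome, `∑_{ℓ ≤ k, ℓ even} p_k(ℓ)`, equals `1 − k/n` when `k` is even, and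
equals `k/n` when `k` is odd. -/
theorem schurProb_even_outcome (n k : ℕ) (hn : 1 ≤ n) (hk : k ≤ n / 2) :
    (Even k →
      ∑ ℓ ∈ (Finset.range (k + 1)).filter (fun ℓ => Even ℓ), schurProb n k ℓ
        = 1 - (k : ℝ) / (n : ℝ)) ∧
    (Odd k →
      ∑ ℓ ∈ (Finset.range (k + 1)).filter (fun ℓ => Even ℓ), schurProb n k ℓ
        = (k : ℝ) / (n : ℝ)) := by
  obtain ⟨m, rfl⟩ : ∃ m, n = m + 1 := ⟨n - 1, by omega⟩
  have hsum : ∑ ℓ ∈ (range (k + 1)).filter (fun ℓ => Even ℓ), schurProb (m + 1) k ℓ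
      = (m.choose (2 * (k / 2)) : ℝ) / (m + 1).choose k := by
    rw [← sum_filter_even_choose_sub_choose_pred, sum_div]
    refine sum_congr rfl fun ℓ hℓ => if_pos ?_
    exact Nat.lt_succ_iff.mp (mem_range.mp (mem_filter.mp hℓ).1)
  refine ⟨fun he => ?_, fun ho => ?_⟩
  · rw [hsum, Nat.two_mul_div_two_of_even he, cast_choose_div_cast_choose_succ_left (by omega)]
    push_cast
    ring
  · obtain ⟨j, rfl⟩ : ∃ j, k = j + 1 := ⟨k - 1, by have := ho.pos; omega⟩
    rw [hsum, Nat.two_mul_odd_div_two (Nat.odd_iff.mp ho), Nat.add_sub_cancel,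
      cast_choose_div_cast_choose_succ_succ (by omega)]
    push_cast
    ring
end

section
/- Let p₀, p₁ be real numbers with 0 ≤ p₁ ≤ p₀ ≤ 1 and p₀ + p₁ ≥ 1. Then: (i) for all q₀, q₁ ∈ [0,1], min{q₀·p₀ + q₁·(1 − p₀), (1 − q₀)·p₁ + (1 − q₁)·(1 − p₁)} ≤ p₀/(p₀ + p₁); and (ii) this bound is attained, e.g. by q₀ = 1/(p₀ + p₁) and q₁ = 0. -/
/-! The weighted average `p₁ · A + p₀ · B` of the two success probabilities equals
`p₀ - q₁ (p₀ - p₁) ≤ p₀`, and it dominates `(p₀ + p₁) · min A B`. -/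

theorem add_mul_min_le_add {α : Type*} [Semiring α] [LinearOrder α] [IsOrderedRing α]
    {a b : α} (ha : 0 ≤ a) (hb : 0 ≤ b) (x y : α) :
    (a + b) * min x y ≤ a * x + b * y := by
  rw [add_mul]
  exact add_le_add (mul_le_mul_of_nonneg_left (min_le_left x y) ha)
    (mul_le_mul_of_nonneg_left (min_le_right x y) hb)

theorem weighted_success_eq {R : Type*} [CommRing R] (p₀ p₁ q₀ q₁ : R) :
    p₁ * (q₀ * p₀ + q₁ * (1 - p₀)) + p₀ * ((1 - q₀) * p₁ + (1 - q₁) * (1 - p₁))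
      = p₀ - q₁ * (p₀ - p₁) := by
  ring

theorem min_success_le {K : Type*} [Field K] [LinearOrder K] [IsStrictOrderedRing K]
    {p₀ p₁ q₀ q₁ : K} (h₁ : 0 ≤ p₁) (h₂ : p₁ ≤ p₀) (hs : 0 < p₀ + p₁)
    (hq₁ : 0 ≤ q₁) :
    min (q₀ * p₀ + q₁ * (1 - p₀)) ((1 - q₀) * p₁ + (1 - q₁) * (1 - p₁)) ≤ p₀ / (p₀ + p₁) := by
  rw [le_div_iff₀' hs, add_comm p₀]
  calc (p₁ + p₀) * min _ _
      ≤ p₁ * (q₀ * p₀ + q₁ * (1 - p₀)) + p₀ * ((1 - q₀) * p₁ + (1 - q₁) * (1 - p₁)) :=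
        add_mul_min_le_add h₁ (h₁.trans h₂) _ _
    _ = p₀ - q₁ * (p₀ - p₁) := weighted_success_eq p₀ p₁ q₀ q₁
    _ ≤ p₀ := sub_le_self _ (mul_nonneg hq₁ (sub_nonneg.2 h₂))

theorem min_success_optimal {K : Type*} [Field K] [LinearOrder K] {p₀ p₁ : K}
    (hs : p₀ + p₁ ≠ 0) :
    min ((1 / (p₀ + p₁)) * p₀ + 0 * (1 - p₀)) ((1 - 1 / (p₀ + p₁)) * p₁ + (1 - 0) * (1 - p₁))
      = p₀ / (p₀ + p₁) := by
  have hB : (1 - 1 / (p₀ + p₁)) * p₁ + (1 - 0) * (1 - p₁) = p₀ / (p₀ + p₁) := by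
    field_simp
    ring
  rw [hB, min_eq_right (by rw [zero_mul, add_zero, one_div_mul_eq_div])]

theorem postprocessing_bound_large_general (p₀ p₁ : ℝ) (h₁ : 0 ≤ p₁) (h₂ : p₁ ≤ p₀)
    (h₄ : 1 ≤ p₀ + p₁) :
    (∀ q₀ q₁ : ℝ, q₀ ∈ Set.Icc (0 : ℝ) 1 → q₁ ∈ Set.Icc (0 : ℝ) 1 →
      min (q₀ * p₀ + q₁ * (1 - p₀)) ((1 - q₀) * p₁ + (1 - q₁) * (1 - p₁))
        ≤ p₀ / (p₀ + p₁)) ∧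
    min ((1 / (p₀ + p₁)) * p₀ + 0 * (1 - p₀))
        ((1 - 1 / (p₀ + p₁)) * p₁ + (1 - 0) * (1 - p₁))
      = p₀ / (p₀ + p₁) := by
  have hs : 0 < p₀ + p₁ := zero_lt_one.trans_le h₄
  exact ⟨fun _ _ _ hq₁ => min_success_le h₁ h₂ hs hq₁.1, min_success_optimal hs.ne'⟩

/-- Let `0 ≤ p₁ ≤ p₀ ≤ 1` with `p₀ + p₁ ≥ 1`. Then (i) for all `q₀, q₁ ∈ [0,1]`,
the worst-case success probability
`min (q₀ p₀ + q₁ (1 − p₀)) ((1 − q₀) p₁ + (1 − q₁)(1 − p₁))` is at most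
`p₀/(p₀ + p₁)`; and (ii) this bound is attained by `q₀ = 1/(p₀ + p₁)`, `q₁ = 0`. -/
theorem postprocessing_bound_large (p₀ p₁ : ℝ) (h₁ : 0 ≤ p₁) (h₂ : p₁ ≤ p₀) (h₃ : p₀ ≤ 1)
    (h₄ : 1 ≤ p₀ + p₁) :
    (∀ q₀ q₁ : ℝ, q₀ ∈ Set.Icc (0 : ℝ) 1 → q₁ ∈ Set.Icc (0 : ℝ) 1 →
      min (q₀ * p₀ + q₁ * (1 - p₀)) ((1 - q₀) * p₁ + (1 - q₁) * (1 - p₁))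
        ≤ p₀ / (p₀ + p₁)) ∧
    min ((1 / (p₀ + p₁)) * p₀ + 0 * (1 - p₀))
        ((1 - 1 / (p₀ + p₁)) * p₁ + (1 - 0) * (1 - p₁))
      = p₀ / (p₀ + p₁) :=
  postprocessing_bound_large_general p₀ p₁ h₁ h₂ h₄
end

section
/- Let n be a natural number with n ≥ 4 and n divisible by 4. Then there exist q₀, q₁ ∈ [0,1] (namely q₀ = 1 and q₁ = 1/(n+1)) such that for every k with 0 ≤ k ≤ n/2: if k is even then q₀·E_k + q₁·(1 − E_k) ≥ 1/2 + 1/(2(n+1)), and if k is odd then (1 − q₀)·E_k + (1 − q₁)·(1 − E_k) ≥ 1/2 + 1/(2(n+1)), where E_k = ∑_{ℓ ≤ k, ℓ even} p_k(ℓ). Hence the parity of the Hamming weight can be computed from a weak Schur sampling outcome with worst-case success probability at least 1/2 + 1/(2(n+1)). -/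
/-- `E_k`: the probability that the weak Schur sampling outcome `ℓ` is even, on an
input of Hamming weight `k`. -/
noncomputable def evenOutcomeProb (n k : ℕ) : ℝ :=
  ∑ ℓ ∈ (Finset.range (k + 1)).filter (fun ℓ => Even ℓ), schurProb n k ℓ

open Finset

lemma sum_even_choose_succ_sub_choose (n k : ℕ) :
    ∑ ℓ ∈ (range (k + 1)).filter Even,
      (((n + 1).choose ℓ : ℝ) - if ℓ = 0 then 0 else ((n + 1).choose (ℓ - 1) : ℝ))
    = n.choose (2 * (k / 2)) := by
  induction k with
  | zero => simp [range_one, filter_singleton]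
  | succ k ih =>
    rw [range_add_one, filter_insert]
    rcases Nat.even_or_odd k with ⟨j, rfl⟩ | ⟨j, rfl⟩
    · have hodd : ¬ Even (j + j + 1) := by simp [Nat.even_add_one]
      rw [if_neg hodd, ih]
      congr 3
      omega
    · have heven : Even (2 * j + 1 + 1) := ⟨j + 1, by ring⟩
      have hnotmem : 2 * j + 1 + 1 ∉ (range (2 * j + 1 + 1)).filter Even := by simp
      rw [if_pos heven, sum_insert hnotmem, ih, if_neg (by omega),
        show (2 * j + 1 + 1) / 2 = j + 1 by omega, show (2 * j + 1) / 2 = j by omega,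
        Nat.add_sub_cancel, Nat.choose_succ_succ', Nat.choose_succ_succ']
      push_cast
      ring_nf

lemma evenOutcomeProb_succ (n k : ℕ) :
    evenOutcomeProb (n + 1) k = n.choose (2 * (k / 2)) / (n + 1).choose k := by
  rw [evenOutcomeProb, ← sum_even_choose_succ_sub_choose, sum_div]
  refine sum_congr rfl fun ℓ hℓ => ?_
  rw [schurProb, if_pos (Nat.lt_succ_iff.mp (mem_range.mp (mem_filter.mp hℓ).1))]

lemma evenOutcomeProb_of_even {n k : ℕ} (hn : 0 < n) (hk : k ≤ n) (he : Even k) :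
    evenOutcomeProb n k = (n - k) / n := by
  obtain ⟨m, rfl⟩ := Nat.exists_eq_add_one_of_ne_zero hn.ne'
  have hpos : ((m + 1).choose k : ℝ) ≠ 0 := by exact_mod_cast (Nat.choose_pos hk).ne'
  rw [evenOutcomeProb_succ, Nat.two_mul_div_two_of_even he, div_eq_div_iff hpos (by positivity)]
  have h := Nat.choose_mul_succ_eq m k
  rw [← Nat.cast_inj (R := ℝ)] at h
  push_cast [Nat.cast_sub hk] at h ⊢
  linear_combination h

lemma evenOutcomeProb_of_odd {n k : ℕ} (hn : 0 < n) (hk : k ≤ n) (ho : Odd k) :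
    evenOutcomeProb n k = k / n := by
  obtain ⟨m, rfl⟩ := Nat.exists_eq_add_one_of_ne_zero hn.ne'
  obtain ⟨j, rfl⟩ := ho
  have hpos : ((m + 1).choose (2 * j + 1) : ℝ) ≠ 0 := by exact_mod_cast (Nat.choose_pos hk).ne'
  rw [evenOutcomeProb_succ, show (2 * j + 1) / 2 = j by omega,
    div_eq_div_iff hpos (by positivity)]
  have h := Nat.add_one_mul_choose_eq m (2 * j)
  rw [← Nat.cast_inj (R := ℝ)] at h
  push_cast at h ⊢
  linear_combination h

/-- For `n ≥ 4` divisible by `4`, there exist `q₀, q₁ ∈ [0,1]` (namely `q₀ = 1` and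
`q₁ = 1/(n+1)`) such that for every `k ≤ n/2`: if `k` is even then
`q₀ E_k + q₁ (1 − E_k) ≥ 1/2 + 1/(2(n+1))`, and if `k` is odd then
`(1 − q₀) E_k + (1 − q₁)(1 − E_k) ≥ 1/2 + 1/(2(n+1))`. Hence the parity of the
Hamming weight can be computed with worst-case success probability at least
`1/2 + 1/(2(n+1))`. -/
theorem parity_two_sided (n : ℕ) (hn : 4 ≤ n) (hdvd : 4 ∣ n) :
    ∃ q₀ q₁ : ℝ, q₀ ∈ Set.Icc (0 : ℝ) 1 ∧ q₁ ∈ Set.Icc (0 : ℝ) 1 ∧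
      q₀ = 1 ∧ q₁ = 1 / ((n : ℝ) + 1) ∧
      ∀ k : ℕ, k ≤ n / 2 →
        (Even k →
          q₀ * evenOutcomeProb n k + q₁ * (1 - evenOutcomeProb n k)
            ≥ 1 / 2 + 1 / (2 * ((n : ℝ) + 1))) ∧
        (Odd k →
          (1 - q₀) * evenOutcomeProb n k + (1 - q₁) * (1 - evenOutcomeProb n k)
            ≥ 1 / 2 + 1 / (2 * ((n : ℝ) + 1))) := by
  have hn0 : 0 < n := by omega
  have hnR : (0 : ℝ) < n := by exact_mod_cast hn0
  refine ⟨1, 1 / ((n : ℝ) + 1), ⟨zero_le_one, le_rfl⟩,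
    ⟨by positivity, div_le_one_of_le₀ (by linarith) (by positivity)⟩, rfl, rfl,
    fun k hk => ⟨fun he => ?_, fun ho => ?_⟩⟩
  · have h2k : 2 * (k : ℝ) ≤ n := by exact_mod_cast (by omega : 2 * k ≤ n)
    rw [evenOutcomeProb_of_even hn0 (by omega) he, ge_iff_le, ← sub_nonneg]
    have margin : 1 * ((n - k) / n) + 1 / ((n : ℝ) + 1) * (1 - (n - k) / n)
        - (1 / 2 + 1 / (2 * ((n : ℝ) + 1))) = (n - 2 * k) / (2 * (n + 1)) := by
      field_simp
      ring
    rw [margin]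
    exact div_nonneg (by linarith) (by positivity)
  · -- `4 ∣ n` rules out the odd `k = n / 2`, which would leave no room for the bias `q₁`
    have h2k : 2 * (k : ℝ) + 2 ≤ n := by
      obtain ⟨j, rfl⟩ := ho
      exact_mod_cast (by omega : 2 * (2 * j + 1) + 2 ≤ n)
    rw [evenOutcomeProb_of_odd hn0 (by omega) ho, ge_iff_le, ← sub_nonneg]
    have margin : (1 - 1) * (k / n) + (1 - 1 / ((n : ℝ) + 1)) * (1 - k / n)
        - (1 / 2 + 1 / (2 * ((n : ℝ) + 1))) = (n - 2 * k - 2) / (2 * (n + 1)) := by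
      field_simp
      ring
    rw [margin]
    exact div_nonneg (by linarith) (by positivity)
end
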